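/- arXiv:2502.18084 — 5 statements merged into one kernel-verified Lean document; each statement's English description precedes it below -/
import Mathlib

section
/- Let q ≥ 4, let s be a positive integer, and for 1 ≤ u ≤ s define D_u = ( ((q−1)^{u+1} + (−1)^u)/q + (−1)^{u+1} ) · (q−1)^{s−u}. Then for every integer k with 1 ≤ 2k−1 and 2k+2 ≤ s one has the chain of inequalities D_{2k−1} > D_{2k+1} > (q−1)^{s+1}/q > D_{2k+2} > D_{2k} (as rational numbers). -/
lemma key {q s u : ℕ} (hq : 4 ≤ q) (hu : u ≤ s) :
    ((((q : ℚ) - 1) ^ (u + 1) + (-1) ^ u) / q + (-1) ^ (u + 1)) *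
        ((q : ℚ) - 1) ^ (s - u)
    = (((q:ℚ)-1)^(s+1) + (-1)^(u+1) * ((q:ℚ)-1)^(s+1-u)) / q := by
  have hq0 : (q:ℚ) ≠ 0 := by
    have : (0:ℚ) < q := by exact_mod_cast Nat.lt_of_lt_of_le (by norm_num) hq
    exact ne_of_gt this
  have h1 : ((q:ℚ)-1)^(u+1) * ((q:ℚ)-1)^(s-u) = ((q:ℚ)-1)^(s+1) := by
    rw [← pow_add]; congr 1; omega
  have h2 : ((q:ℚ)-1)^(s-u) * ((q:ℚ)-1) = ((q:ℚ)-1)^(s+1-u) := by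
    rw [← pow_succ]; congr 1; omega
  have hp : ((-1:ℚ))^(u+1) = -(-1)^u := by rw [pow_succ]; ring
  field_simp
  linear_combination h1 + (-1:ℚ)^(u+1)*h2 + ((q:ℚ)-1)^(s-u)*hp

theorem stmt5 {q s k : ℕ} (hq : 4 ≤ q) (hk : 1 ≤ k) (hks : 2 * k + 2 ≤ s)
    (D : ℕ → ℚ)
    (hD : ∀ u : ℕ, D u =
      ((((q : ℚ) - 1) ^ (u + 1) + (-1) ^ u) / q + (-1) ^ (u + 1)) *
        ((q : ℚ) - 1) ^ (s - u)) :
    D (2 * k - 1) > D (2 * k + 1) ∧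
    D (2 * k + 1) > ((q : ℚ) - 1) ^ (s + 1) / q ∧
    ((q : ℚ) - 1) ^ (s + 1) / q > D (2 * k + 2) ∧
    D (2 * k + 2) > D (2 * k) := by
  have hq0 : (0:ℚ) < q := by exact_mod_cast Nat.lt_of_lt_of_le (by norm_num) hq
  have hQ : (1:ℚ) < (q:ℚ) - 1 := by
    have : (4:ℚ) ≤ q := by exact_mod_cast hq
    linarith
  have hQ0 : (0:ℚ) < (q:ℚ) - 1 := by linarith
  have p1 : ((-1:ℚ))^(2*k-1+1) = 1 := by
    have h : 2*k-1+1 = 2*k := by omega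
    rw [h]; exact (even_two_mul k).neg_one_pow
  have p2 : ((-1:ℚ))^(2*k+1+1) = 1 := by
    have h : 2*k+1+1 = 2*(k+1) := by omega
    rw [h]; exact (even_two_mul (k+1)).neg_one_pow
  have p3 : ((-1:ℚ))^(2*k+2+1) = -1 := Odd.neg_one_pow ⟨k+1, by ring⟩
  have p4 : ((-1:ℚ))^(2*k+1) = -1 := Odd.neg_one_pow ⟨k, by ring⟩
  have e1 : D (2*k-1) = (((q:ℚ)-1)^(s+1) + ((q:ℚ)-1)^(s+1-(2*k-1)))/q := by
    rw [hD, key hq (by omega), p1, one_mul]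
  have e2 : D (2*k+1) = (((q:ℚ)-1)^(s+1) + ((q:ℚ)-1)^(s+1-(2*k+1)))/q := by
    rw [hD, key hq (by omega), p2, one_mul]
  have e3 : D (2*k+2) = (((q:ℚ)-1)^(s+1) - ((q:ℚ)-1)^(s+1-(2*k+2)))/q := by
    rw [hD, key hq (by omega), p3]; ring
  have e4 : D (2*k) = (((q:ℚ)-1)^(s+1) - ((q:ℚ)-1)^(s+1-(2*k)))/q := by
    rw [hD, key hq (by omega), p4]; ring
  have mono : ∀ a b : ℕ, a < b → ((q:ℚ)-1)^a < ((q:ℚ)-1)^b := fun a b h =>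
    pow_lt_pow_right₀ hQ h
  refine ⟨?_, ?_, ?_, ?_⟩
  · rw [e1, e2, gt_iff_lt, div_lt_div_iff_of_pos_right hq0]
    have := mono (s+1-(2*k+1)) (s+1-(2*k-1)) (by omega)
    linarith
  · rw [e2, gt_iff_lt, div_lt_div_iff_of_pos_right hq0]
    have := pow_pos hQ0 (s+1-(2*k+1))
    linarith
  · rw [e3, gt_iff_lt, div_lt_div_iff_of_pos_right hq0]
    have := pow_pos hQ0 (s+1-(2*k+2))
    linarith
  · rw [e3, e4, gt_iff_lt, div_lt_div_iff_of_pos_right hq0]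
    have := mono (s+1-(2*k+2)) (s+1-(2*k)) (by omega)
    linarith
end

section
/- Let f ∈ F_q[t_1,…,t_s] be a monomially square-free homogeneous polynomial of degree d, where 1 ≤ d ≤ s. Then the number of points P ∈ (F_q^*)^s with f(P) ≠ 0 equals the number of points Q ∈ (F_q^*)^s with f^c(Q) ≠ 0, where f^c is the complement of f. In particular the weight of the codeword of C(d) determined by f equals the weight of the codeword of C(s−d) determined by f^c. -/
open MvPolynomial

/-- `f` is monomially square-free and homogeneous of degree `d`. -/
def MSqFreeHomog {F : Type*} [CommSemiring F] {s : ℕ} (d : ℕ)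
    (f : MvPolynomial (Fin s) F) : Prop :=
  ∀ m ∈ f.support, (∀ i : Fin s, m i ≤ 1) ∧ (∑ i : Fin s, m i) = d

/-- The complement map on polynomials: the linear extension of the map sending a
square-free monomial `∏_{j ∈ S} t_j` to `∏_{j ∉ S} t_j`. -/
noncomputable def mcomp {F : Type*} [CommSemiring F] {s : ℕ}
    (f : MvPolynomial (Fin s) F) : MvPolynomial (Fin s) F :=
  ∑ m ∈ f.support,
    MvPolynomial.monomial
      (Finsupp.equivFunOnFinite.symm fun i : Fin s => if m i = 0 then 1 else 0)
      (f.coeff m)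

lemma eval_mcomp {F : Type*} [Field F] {s : ℕ}
    (f : MvPolynomial (Fin s) F) (hsq : ∀ m ∈ f.support, ∀ i : Fin s, m i ≤ 1)
    (P : Fin s → Fˣ) :
    MvPolynomial.eval (fun i => (P i : F)) (mcomp f) =
      (∏ i, (P i : F)) * MvPolynomial.eval (fun i => (((P i)⁻¹ : Fˣ) : F)) f := by
  rw [mcomp, map_sum, MvPolynomial.eval_eq', Finset.mul_sum]
  refine Finset.sum_congr rfl fun m hm => ?_
  rw [MvPolynomial.eval_monomial]
  rw [Finsupp.prod_fintype _ _ (fun i => pow_zero _)]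
  simp only [Finsupp.coe_equivFunOnFinite_symm]
  have : (∏ i, (P i : F) ^ (if m i = 0 then 1 else 0)) =
      (∏ i, (P i : F)) * ∏ i, (((P i)⁻¹ : Fˣ) : F) ^ m i := by
    rw [← Finset.prod_mul_distrib]
    refine Finset.prod_congr rfl fun i _ => ?_
    have h1 := hsq m hm i
    interval_cases h : m i
    · simp
    · simp
  rw [this]
  ring

theorem stmt13 {s d : ℕ} {F : Type*} [Field F] [Fintype F]
    (hd1 : 1 ≤ d) (hds : d ≤ s)
    (f : MvPolynomial (Fin s) F) (hf : MSqFreeHomog d f) :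
    Nat.card {P : Fin s → Fˣ // MvPolynomial.eval (fun i => (P i : F)) f ≠ 0} =
      Nat.card {Q : Fin s → Fˣ //
        MvPolynomial.eval (fun i => (Q i : F)) (mcomp f) ≠ 0} := by
  have hsq : ∀ m ∈ f.support, ∀ i : Fin s, m i ≤ 1 := fun m hm => (hf m hm).1
  refine Nat.card_eq_of_bijective (fun P => ⟨fun i => (P.1 i)⁻¹, ?_⟩) ?_
  · rw [eval_mcomp f hsq]
    simp only [inv_inv]
    intro h
    rcases mul_eq_zero.mp h with h | h
    · exact (Units.ne_zero _) (Finset.prod_eq_zero_iff.mp h).choose_spec.2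
    · exact P.2 h
  · constructor
    · intro P Q h
      apply Subtype.ext; funext i
      exact inv_injective (congrFun (congrArg Subtype.val h) i)
    · intro Q
      refine ⟨⟨fun i => (Q.1 i)⁻¹, ?_⟩, ?_⟩
      · intro h
        apply Q.2
        rw [eval_mcomp f hsq]
        simp only [inv_inv] at h ⊢
        rw [h, mul_zero]
      · ext i; simp
end

section
/- Let F_q be a finite field with q elements, let s and d be positive integers with d ≥ 1 and 2d + 2 ≤ s, let b_1, …, b_{d−1}, c_1, …, c_{d−1}, e_1, e_2, e_3, e_4 be 2d + 2 distinct elements of {1,…,s}, and let α_1, …, α_{d−1}, β_2, β_3, β_4 ∈ F_q^*. Then the number of points (β'_1,…,β'_s) ∈ (F_q^*)^s at which the polynomial (∏_{i=1}^{d−1} (t_{b_i} + α_i t_{c_i}))·(t_{e_1} + β_2 t_{e_2} + β_3 t_{e_3} + β_4 t_{e_4}) does not vanish equals (q−2)^d (q−1)^{s−d} + (q−2)^d (q−1)^{s−d−2}. -/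
open MvPolynomial

/-- The weight of `f`: the number of points of the torus `(Fˣ)^s` at which `f`
does not vanish. -/
noncomputable def torusWeight {F : Type*} [Field F] [Fintype F] {s : ℕ}
    (f : MvPolynomial (Fin s) F) : ℕ :=
  Nat.card {P : Fin s → Fˣ // MvPolynomial.eval (fun i => (P i : F)) f ≠ 0}

private lemma count_step {F : Type*} [Field F] [Fintype F] {X : Type*} [Fintype X]
    (γ : Fˣ) (f : X → F) :
    Nat.card {p : Fˣ × X // (γ : F) * p.1 + f p.2 ≠ 0} =
      (Fintype.card F - 2) * Nat.card {x // f x ≠ 0} +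
      (Fintype.card F - 1) * (Fintype.card X - Nat.card {x // f x ≠ 0}) := by
  classical
  have hcard : ∀ x : X, Nat.card {u : Fˣ // (γ : F) * u + f x ≠ 0} =
      if f x ≠ 0 then Fintype.card F - 2 else Fintype.card F - 1 := by
    intro x
    by_cases h : f x = 0
    · simp only [h, if_neg (not_not.mpr h)]
      rw [Nat.card_congr (Equiv.subtypeUnivEquiv (fun u => by
        simpa using mul_ne_zero γ.ne_zero u.ne_zero))]
      simp [Nat.card_eq_fintype_card, Fintype.card_units]
    · rw [if_pos h]
      set v : Fˣ := -(γ⁻¹ * Units.mk0 (f x) h) with hv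
      have : ∀ u : Fˣ, ((γ : F) * u + f x ≠ 0) ↔ u ≠ v := by
        intro u
        rw [not_iff_not]
        constructor
        · intro h1
          have : (u : F) = (v : F) := by
            rw [hv]; push_cast [Units.val_mk0]
            field_simp
            linear_combination h1
          exact Units.ext this
        · intro h1
          subst h1
          push_cast [hv]
          field_simp
          simp
      rw [Nat.card_congr (Equiv.subtypeEquivRight this), Nat.card_eq_fintype_card,
        Fintype.card_subtype_compl, Fintype.card_subtype_eq, Fintype.card_units]
      omega
  have e1 : {p : Fˣ × X // (γ : F) * p.1 + f p.2 ≠ 0} ≃ Σ x : X, {u : Fˣ // (γ : F) * u + f x ≠ 0} :=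
    (Equiv.subtypeEquiv (Equiv.prodComm Fˣ X) (p := fun p => (γ : F) * p.1 + f p.2 ≠ 0)
        (q := fun p => (γ : F) * p.2 + f p.1 ≠ 0) (fun p => Iff.rfl)).trans
      (Equiv.subtypeProdEquivSigmaSubtype (fun (x : X) (u : Fˣ) => (γ : F) * u + f x ≠ 0))
  rw [Nat.card_congr e1, Nat.card_eq_fintype_card, Fintype.card_sigma]
  have : ∀ x : X, Fintype.card {u : Fˣ // (γ : F) * u + f x ≠ 0} =
      if f x ≠ 0 then Fintype.card F - 2 else Fintype.card F - 1 := by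
    intro x; rw [← Nat.card_eq_fintype_card]; exact hcard x
  rw [Finset.sum_congr rfl (fun x _ => this x), Finset.sum_ite, Finset.sum_const,
    Finset.sum_const, smul_eq_mul, smul_eq_mul]
  have h1 : (Finset.filter (fun x => f x ≠ 0) Finset.univ).card = Nat.card {x // f x ≠ 0} := by
    rw [Nat.card_eq_fintype_card, Fintype.card_subtype]
  have h2 : (Finset.filter (fun x => ¬ f x ≠ 0) Finset.univ).card
      = Fintype.card X - Nat.card {x // f x ≠ 0} := by
    rw [← h1]
    have := Finset.card_filter_add_card_filter_not (s := (Finset.univ : Finset X))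
      (p := fun x => f x ≠ 0)
    simp only [Finset.card_univ] at this
    omega
  rw [h1, h2, mul_comm (Nat.card _), mul_comm (Fintype.card X - _)]

private def fstSubtype {A B : Type*} (p : A → Prop) : {x : A × B // p x.1} ≃ {a // p a} × B where
  toFun x := (⟨x.1.1, x.2⟩, x.1.2)
  invFun y := ⟨(y.1.1, y.2), y.1.2⟩
  left_inv _ := rfl
  right_inv _ := rfl

private lemma card_comp {κ S G : Type*} [Fintype κ] [Fintype S] [Fintype G]
    (ι : κ → S) (hinj : Function.Injective ι) (Q : (κ → G) → Prop) :
    Nat.card {P : S → G // Q (P ∘ ι)} =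
      Nat.card {g : κ → G // Q g} * Fintype.card G ^ (Fintype.card S - Fintype.card κ) := by
  classical
  set p : S → Prop := fun x => x ∈ Set.range ι with hp
  let E : κ ⊕ {x // ¬ p x} ≃ S :=
    (Equiv.sumCongr (Equiv.ofInjective ι hinj) (Equiv.refl _)).trans (Equiv.sumCompl p)
  let C : (S → G) ≃ (κ → G) × ({x // ¬ p x} → G) :=
    ((E.arrowCongr (Equiv.refl G)).symm).trans (Equiv.sumArrowEquivProdArrow _ _ _)
  have key : ∀ P : S → G, (C P).1 = P ∘ ι := by
    intro P; funext t; rfl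
  have e1 : {P : S → G // Q (P ∘ ι)} ≃ {y : (κ → G) × ({x // ¬ p x} → G) // Q y.1} :=
    Equiv.subtypeEquiv C (fun P => by rw [key P])
  rw [Nat.card_congr (e1.trans (fstSubtype Q)), Nat.card_prod]
  congr 1
  rw [Nat.card_eq_fintype_card, Fintype.card_fun]
  congr 1
  have h1 : Fintype.card {x // p x} = Fintype.card κ := by
    rw [← Nat.card_eq_fintype_card, ← Nat.card_eq_fintype_card]
    exact Nat.card_congr (Equiv.ofInjective ι hinj).symm
  rw [Fintype.card_subtype_compl, h1]

private lemma card_sum_split {A B G : Type*} (Q1 : (A → G) → Prop) (Q2 : (B → G) → Prop) :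
    Nat.card {g : A ⊕ B → G // Q1 (g ∘ Sum.inl) ∧ Q2 (g ∘ Sum.inr)} =
      Nat.card {h // Q1 h} * Nat.card {k // Q2 k} := by
  rw [← Nat.card_prod]
  exact Nat.card_congr ((Equiv.subtypeEquiv (Equiv.sumArrowEquivProdArrow A B G)
    (p := fun g => Q1 (g ∘ Sum.inl) ∧ Q2 (g ∘ Sum.inr)) (q := fun y => Q1 y.1 ∧ Q2 y.2)
    (fun g => Iff.rfl)).trans Equiv.subtypeProdEquivProd)

private lemma card_pair_pi {n : ℕ} {G : Type*} (R : Fin n → G → G → Prop) :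
    Nat.card {h : Fin n ⊕ Fin n → G // ∀ i, R i (h (Sum.inl i)) (h (Sum.inr i))} =
      ∏ i, Nat.card {x : G × G // R i x.1 x.2} := by
  classical
  rw [← Nat.card_pi]
  exact Nat.card_congr ((Equiv.subtypeEquiv ((Equiv.sumArrowEquivProdArrow (Fin n) (Fin n) G).trans
    (Equiv.arrowProdEquivProdArrow (Fin n) (fun _ => G) (fun _ => G)).symm)
    (p := fun h => ∀ i, R i (h (Sum.inl i)) (h (Sum.inr i)))
    (q := fun f => ∀ i, R i (f i).1 (f i).2) (fun h => Iff.rfl)).trans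
    (Equiv.subtypePiEquivPi (p := fun i (x : G × G) => R i x.1 x.2)))

private lemma card_pair {F : Type*} [Field F] [Fintype F] (α : Fˣ) :
    Nat.card {x : Fˣ × Fˣ // (x.1 : F) + (α : F) * x.2 ≠ 0} =
      (Fintype.card F - 2) * (Fintype.card F - 1) := by
  classical
  have e : {x : Fˣ × Fˣ // (x.1 : F) + (α : F) * x.2 ≠ 0}
      ≃ {x : Fˣ × Fˣ // ((1 : Fˣ) : F) * x.1 + (α : F) * x.2 ≠ 0} :=
    Equiv.subtypeEquivRight (fun x => by simp)
  have h := count_step (F := F) 1 (fun y : Fˣ => (α : F) * y)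
  rw [Nat.card_congr e, h]
  have h1 : Nat.card {y : Fˣ // (α : F) * y ≠ 0} = Fintype.card F - 1 := by
    rw [Nat.card_congr (Equiv.subtypeUnivEquiv (fun y => mul_ne_zero α.ne_zero y.ne_zero)),
      Nat.card_eq_fintype_card, Fintype.card_units]
  rw [h1, Fintype.card_units]
  simp

private def e4 {G : Type*} : (Fin 4 → G) ≃ G × (G × (G × G)) where
  toFun k := (k 0, k 1, k 2, k 3)
  invFun x := ![x.1, x.2.1, x.2.2.1, x.2.2.2]
  left_inv k := by funext i; fin_cases i <;> rfl
  right_inv _ := rfl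

private lemma card_four {F : Type*} [Field F] [Fintype F] (β : Fin 3 → Fˣ) :
    Nat.card {k : Fin 4 → Fˣ //
        (k 0 : F) + (β 0 : F) * k 1 + (β 1 : F) * k 2 + (β 2 : F) * k 3 ≠ 0} =
      (Fintype.card F - 2) * (Fintype.card F - 1) * ((Fintype.card F - 1) ^ 2 + 1) := by
  classical
  set m := Fintype.card F with hm
  have hm2 : 2 ≤ m := Fintype.one_lt_card
  have hu : Fintype.card Fˣ = m - 1 := by rw [Fintype.card_units]
  obtain ⟨t, ht⟩ : ∃ t, m = t + 2 := ⟨m - 2, by omega⟩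
  have L2 : Nat.card {z : Fˣ × Fˣ // (β 1 : F) * z.1 + (β 2 : F) * z.2 ≠ 0}
      = t * (t + 1) := by
    have h := count_step (F := F) (β 1) (fun w : Fˣ => (β 2 : F) * w)
    have h1 : Nat.card {y : Fˣ // (β 2 : F) * y ≠ 0} = m - 1 := by
      rw [Nat.card_congr (Equiv.subtypeUnivEquiv (fun y => mul_ne_zero (β 2).ne_zero y.ne_zero)),
        Nat.card_eq_fintype_card, hu]
    rw [h, h1, hu, ← hm, ht]
    simp
  have L3 : Nat.card {y : Fˣ × (Fˣ × Fˣ) //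
      (β 0 : F) * y.1 + ((β 1 : F) * y.2.1 + (β 2 : F) * y.2.2) ≠ 0}
      = t * (t * (t + 1)) + (t + 1) * ((t + 1) * (t + 1) - t * (t + 1)) := by
    have h := count_step (F := F) (β 0)
      (fun z : Fˣ × Fˣ => (β 1 : F) * z.1 + (β 2 : F) * z.2)
    rw [h, L2, Fintype.card_prod, hu, ← hm, ht]
    simp
  have e1 : {k : Fin 4 → Fˣ //
        (k 0 : F) + (β 0 : F) * k 1 + (β 1 : F) * k 2 + (β 2 : F) * k 3 ≠ 0}
      ≃ {x : Fˣ × (Fˣ × (Fˣ × Fˣ)) //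
        ((1 : Fˣ) : F) * x.1 + ((β 0 : F) * x.2.1 + ((β 1 : F) * x.2.2.1 + (β 2 : F) * x.2.2.2)) ≠ 0} := by
    refine (Equiv.subtypeEquiv (e4 (G := Fˣ))
      (p := fun k => (k 0 : F) + (β 0 : F) * k 1 + (β 1 : F) * k 2 + (β 2 : F) * k 3 ≠ 0)
      (q := fun x => ((1 : Fˣ) : F) * x.1 +
        ((β 0 : F) * x.2.1 + ((β 1 : F) * x.2.2.1 + (β 2 : F) * x.2.2.2)) ≠ 0) ?_)
    intro k
    show ((k 0 : F) + (β 0 : F) * k 1 + (β 1 : F) * k 2 + (β 2 : F) * k 3 ≠ 0) ↔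
      (((1 : Fˣ) : F) * (k 0) + ((β 0 : F) * k 1 + ((β 1 : F) * k 2 + (β 2 : F) * k 3)) ≠ 0)
    rw [show ((1 : Fˣ) : F) * (k 0) +
        ((β 0 : F) * k 1 + ((β 1 : F) * k 2 + (β 2 : F) * k 3)) =
        (k 0 : F) + (β 0 : F) * k 1 + (β 1 : F) * k 2 + (β 2 : F) * k 3 by push_cast; ring]
  have h := count_step (F := F) 1
    (fun y : Fˣ × (Fˣ × Fˣ) => (β 0 : F) * y.1 + ((β 1 : F) * y.2.1 + (β 2 : F) * y.2.2))
  rw [Nat.card_congr e1, h, L3, Fintype.card_prod, Fintype.card_prod, hu, ← hm, ht]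
  have e2 : t + 2 - 1 = t + 1 := by omega
  have e3 : t + 2 - 2 = t := by omega
  rw [e2, e3]
  have e5 : (t + 1) * (t + 1) - t * (t + 1) = t + 1 := by
    rw [Nat.sub_eq_iff_eq_add (Nat.mul_le_mul_right _ (by omega))]; ring
  rw [e5]
  have e6 : (t + 1) * ((t + 1) * (t + 1)) - (t * (t * (t + 1)) + (t + 1) * (t + 1)) = t * (t + 1) := by
    have : t * (t * (t + 1)) + (t + 1) * (t + 1) + t * (t + 1) = (t + 1) * ((t + 1) * (t + 1)) := by ring
    omega
  rw [e6]
  ring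

theorem stmt15 {q s d : ℕ} {F : Type*} [Field F] [Fintype F]
    (hq : Fintype.card F = q) (hd : 1 ≤ d) (hds : 2 * d + 2 ≤ s)
    (b c : Fin (d - 1) → Fin s) (e : Fin 4 → Fin s)
    (hinj : Function.Injective (Sum.elim (Sum.elim b c) e))
    (a : Fin (d - 1) → Fˣ) (β : Fin 3 → Fˣ) :
    torusWeight ((∏ i, (X (b i) + C ((a i : F)) * X (c i))) *
        (X (e 0) + C ((β 0 : F)) * X (e 1) + C ((β 1 : F)) * X (e 2) +
          C ((β 2 : F)) * X (e 3))) =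
      (q - 2) ^ d * (q - 1) ^ (s - d) + (q - 2) ^ d * (q - 1) ^ (s - d - 2) := by
  classical
  subst hq
  set m := Fintype.card F with hm
  have hm2 : 2 ≤ m := Fintype.one_lt_card
  unfold torusWeight
  set ι := Sum.elim (Sum.elim b c) e with hι
  set R : Fin (d - 1) → Fˣ → Fˣ → Prop := fun i x y => (x : F) + (a i : F) * y ≠ 0 with hR
  set Q1 : ((Fin (d - 1) ⊕ Fin (d - 1)) → Fˣ) → Prop :=
    fun h => ∀ i, R i (h (Sum.inl i)) (h (Sum.inr i)) with hQ1
  set Q2 : (Fin 4 → Fˣ) → Prop :=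
    fun k => (k 0 : F) + (β 0 : F) * k 1 + (β 1 : F) * k 2 + (β 2 : F) * k 3 ≠ 0 with hQ2
  have hiff : ∀ P : Fin s → Fˣ,
      (MvPolynomial.eval (fun i => (P i : F))
        ((∏ i, (X (b i) + C ((a i : F)) * X (c i))) *
        (X (e 0) + C ((β 0 : F)) * X (e 1) + C ((β 1 : F)) * X (e 2) +
          C ((β 2 : F)) * X (e 3))) ≠ 0) ↔
      Q1 ((P ∘ ι) ∘ Sum.inl) ∧ Q2 ((P ∘ ι) ∘ Sum.inr) := by
    intro P
    rw [map_mul, mul_ne_zero_iff]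
    simp only [map_prod, Finset.prod_ne_zero_iff, Finset.mem_univ, forall_const,
      map_add, map_mul, eval_X, eval_C, hQ1, hQ2, hR, hι, Function.comp_apply,
      Sum.elim_inl, Sum.elim_inr]
  rw [Nat.card_congr (Equiv.subtypeEquivRight hiff),
    card_comp ι hinj (fun g => Q1 (g ∘ Sum.inl) ∧ Q2 (g ∘ Sum.inr)),
    card_sum_split Q1 Q2, hQ1, card_pair_pi R]
  have hpair : ∀ i : Fin (d - 1), Nat.card {x : Fˣ × Fˣ // R i x.1 x.2}
      = (m - 2) * (m - 1) := fun i => card_pair (a i)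
  rw [Finset.prod_congr rfl (fun i _ => hpair i), Finset.prod_const, Finset.card_univ,
    Fintype.card_fin]
  rw [hQ2, card_four β]
  have hcards : Fintype.card ((Fin (d - 1) ⊕ Fin (d - 1)) ⊕ Fin 4) = (d - 1) + (d - 1) + 4 := by
    simp
  rw [hcards, Fintype.card_fin, Fintype.card_units, ← hm]
  -- now pure arithmetic
  obtain ⟨j, rfl⟩ : ∃ j, d = j + 1 := ⟨d - 1, by omega⟩
  obtain ⟨u, rfl⟩ : ∃ u, s = 2 * (j + 1) + 2 + u := ⟨s - (2 * (j + 1) + 2), by omega⟩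
  obtain ⟨t, ht⟩ : ∃ t, m = t + 2 := ⟨m - 2, by omega⟩
  rw [ht, show j + 1 - 1 = j from rfl]
  rw [show 2 * (j + 1) + 2 + u - (j + j + 4) = u by omega,
    show 2 * (j + 1) + 2 + u - (j + 1) = j + 3 + u by omega,
    show j + 3 + u - 2 = j + 1 + u by omega,
    show t + 2 - 2 = t from by omega, show t + 2 - 1 = t + 1 from by omega]
  rw [mul_pow]
  ring
end

section
/- Let q ≥ 4 and let s, d be positive integers with 2d ≤ s. For i ∈ {1, 2}, let f_i = ∏_{k=1}^d (t_{b_k^{(i)}} + α_k^{(i)} t_{c_k^{(i)}}), where for each i the indices b_1^{(i)}, …, b_d^{(i)}, c_1^{(i)}, …, c_d^{(i)} are 2d distinct elements of {1,…,s} with b_1^{(i)} < ⋯ < b_d^{(i)} and b_k^{(i)} < c_k^{(i)} for all k, and α_1^{(i)}, …, α_d^{(i)} ∈ F_q^*. If the triples ((b_k^{(1)})_k, (c_k^{(1)})_k, (α_k^{(1)})_k) and ((b_k^{(2)})_k, (c_k^{(2)})_k, (α_k^{(2)})_k) are distinct, then there exists a point P ∈ (F_q^*)^s with f_1(P) = 0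 and f_2(P) ≠ 0; in particular the evaluation functions P ↦ f_1(P) and P ↦ f_2(P) on (F_q^*)^s are distinct. -/
open MvPolynomial

lemma exists_unit_ne' {F : Type*} [Field F] [Fintype F] (h3 : 3 ≤ Fintype.card F) (a : F) :
    ∃ y : Fˣ, (y : F) ≠ a := by
  classical
  have h2 : 1 < Fintype.card Fˣ := by
    rw [Fintype.card_units]; omega
  obtain ⟨y, z, hyz⟩ := Fintype.exists_pair_of_one_lt_card h2
  by_cases hy : (y : F) = a
  · exact ⟨z, fun hz => hyz (Units.ext (hy.trans hz.symm))⟩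
  · exact ⟨y, hy⟩

theorem stmt16 {q s d : ℕ} {F : Type*} [Field F] [Fintype F]
    (hq : Fintype.card F = q) (hq4 : 4 ≤ q) (hd : 1 ≤ d) (hds : 2 * d ≤ s)
    (b₁ c₁ b₂ c₂ : Fin d → Fin s) (α₁ α₂ : Fin d → Fˣ)
    (hinj₁ : Function.Injective (Sum.elim b₁ c₁))
    (hinj₂ : Function.Injective (Sum.elim b₂ c₂))
    (hmono₁ : StrictMono b₁) (hmono₂ : StrictMono b₂)
    (hbc₁ : ∀ k, b₁ k < c₁ k) (hbc₂ : ∀ k, b₂ k < c₂ k)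
    (hneq : ¬(b₁ = b₂ ∧ c₁ = c₂ ∧ α₁ = α₂)) :
    (∃ P : Fin s → Fˣ,
        MvPolynomial.eval (fun i => (P i : F))
          (∏ k, (X (b₁ k) + C ((α₁ k : F)) * X (c₁ k))) = 0 ∧
        MvPolynomial.eval (fun i => (P i : F))
          (∏ k, (X (b₂ k) + C ((α₂ k : F)) * X (c₂ k))) ≠ 0) ∧
      (fun P : Fin s → Fˣ => MvPolynomial.eval (fun i => (P i : F))
          (∏ k, (X (b₁ k) + C ((α₁ k : F)) * X (c₁ k)))) ≠
        (fun P : Fin s → Fˣ => MvPolynomial.eval (fun i => (P i : F))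
          (∏ k, (X (b₂ k) + C ((α₂ k : F)) * X (c₂ k)))) := by
  classical
  have h3 : 3 ≤ Fintype.card F := by omega
  -- injectivity facts
  have hbinj₂ : Function.Injective b₂ := fun a b h => by
    have := hinj₂ (a₁ := Sum.inl a) (a₂ := Sum.inl b) (by simpa using h)
    simpa using this
  have hcinj₂ : Function.Injective c₂ := fun a b h => by
    have := hinj₂ (a₁ := Sum.inr a) (a₂ := Sum.inr b) (by simpa using h)
    simpa using this
  have hbcne₂ : ∀ k j, b₂ k ≠ c₂ j := fun k j h => by
    have := hinj₂ (a₁ := Sum.inl k) (a₂ := Sum.inr j) (by simpa using h)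
    simp at this
  -- Step 1: a factor of f₁ not among factors of f₂
  have hk₀ : ∃ k₀ : Fin d, ∀ j, ¬(b₁ k₀ = b₂ j ∧ c₁ k₀ = c₂ j ∧ α₁ k₀ = α₂ j) := by
    by_contra h
    push_neg at h
    choose j hjb hjc hjα using h
    have hjinj : Function.Injective j := fun k k' e =>
      hmono₁.injective (by rw [hjb, hjb, e])
    have hjsurj : Function.Surjective j := Finite.surjective_of_injective hjinj
    have hrange : Set.range b₁ = Set.range b₂ := by
      apply Set.Subset.antisymm
      · rintro _ ⟨k, rfl⟩; exact ⟨j k, (hjb k).symm⟩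
      · rintro _ ⟨k, rfl⟩
        obtain ⟨k', rfl⟩ := hjsurj k
        exact ⟨k', hjb k'⟩
    have hb : b₁ = b₂ := (hmono₁.range_inj hmono₂).1 hrange
    have hjid : ∀ k, j k = k := fun k => hmono₂.injective (by rw [← hjb, hb])
    exact hneq ⟨hb, funext fun k => by rw [hjc, hjid], funext fun k => by rw [hjα, hjid]⟩
  obtain ⟨k₀, H⟩ := hk₀
  set u : Fin s := b₁ k₀ with hu
  set v : Fin s := c₁ k₀ with hv
  set α₀ : Fˣ := α₁ k₀ with hα₀
  have huv : u < v := hbc₁ k₀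
  -- baseline values
  set Q : Fin s → F := fun i => if i = u then -(α₀ : F) else 1 with hQ
  -- chosen values
  have hy₁ex : ∀ k : Fin d, ∃ y : Fˣ, (y : F) + (α₂ k : F) * Q (c₂ k) ≠ 0 := by
    intro k
    obtain ⟨y, hy⟩ := exists_unit_ne' h3 (-((α₂ k : F) * Q (c₂ k)))
    exact ⟨y, fun h0 => hy (eq_neg_of_add_eq_zero_left h0)⟩
  have hy₂ex : ∀ k : Fin d, ∃ y : Fˣ, Q (b₂ k) + (α₂ k : F) * (y : F) ≠ 0 := by
    intro k
    obtain ⟨y, hy⟩ := exists_unit_ne' h3 (-((α₂ k : F)⁻¹ * Q (b₂ k)))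
    refine ⟨y, fun h0 => hy ?_⟩
    have hα : (α₂ k : F) ≠ 0 := Units.ne_zero _
    field_simp
    linear_combination h0
  choose y₁ hy₁ using hy₁ex
  choose y₂ hy₂ using hy₂ex
  -- the point
  set P : Fin s → Fˣ := fun i =>
    if i = u then -α₀
    else if i = v then 1
    else if h : ∃ k, b₂ k = i then y₁ h.choose
    else if h : ∃ k, c₂ k = i ∧ (b₂ k = u ∨ b₂ k = v) then y₂ h.choose
    else 1 with hP
  have hvu : v ≠ u := huv.ne'
  have hPu : P u = -α₀ := by simp [hP]
  have hPv : P v = 1 := by simp [hP, hvu]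
  -- value at c₂ k equals Q when b₂ k ∉ {u, v}
  have hPc : ∀ k : Fin d, b₂ k ≠ u → b₂ k ≠ v → (P (c₂ k) : F) = Q (c₂ k) := by
    intro k hku hkv
    by_cases hcu : c₂ k = u
    · rw [hcu, hPu, hQ]; simp
    by_cases hcv : c₂ k = v
    · rw [hcv, hPv, hQ]; simp [hvu, hcv ▸ hcv, hvu]
    have h3' : ¬∃ k', b₂ k' = c₂ k := fun ⟨k', hk'⟩ => hbcne₂ k' k hk'
    have h4' : ¬∃ k', c₂ k' = c₂ k ∧ (b₂ k' = u ∨ b₂ k' = v) := by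
      rintro ⟨k', hk', hk'uv⟩
      cases hcinj₂ hk'
      rcases hk'uv with h' | h'
      exacts [hku h', hkv h']
    rw [hP]
    simp only []
    rw [if_neg hcu, if_neg hcv, dif_neg h3', dif_neg h4']
    simp [hQ, hcu]
  -- value at c₂ k when b₂ k ∈ {u, v} and c₂ k ∉ {u, v}
  have hPc₂ : ∀ k : Fin d, (b₂ k = u ∨ b₂ k = v) → c₂ k ≠ u → c₂ k ≠ v →
      P (c₂ k) = y₂ k := by
    intro k hkuv hcu hcv
    have h3' : ¬∃ k', b₂ k' = c₂ k := fun ⟨k', hk'⟩ => hbcne₂ k' k hk'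
    have h4' : ∃ k', c₂ k' = c₂ k ∧ (b₂ k' = u ∨ b₂ k' = v) := ⟨k, rfl, hkuv⟩
    rw [hP]
    simp only []
    rw [if_neg hcu, if_neg hcv, dif_neg h3', dif_pos h4']
    congr 1
    exact hcinj₂ h4'.choose_spec.1
  -- f₂ factors are all nonzero
  have hf₂ : ∀ k : Fin d, (P (b₂ k) : F) + (α₂ k : F) * (P (c₂ k) : F) ≠ 0 := by
    intro k
    by_cases hku : b₂ k = u
    · by_cases hcv : c₂ k = v
      · -- same edge as the f₁ factor; α's must differ
        have hα : α₀ ≠ α₂ k := fun h => H k ⟨hku.symm, hcv.symm, h⟩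
        rw [hku, hcv, hPu, hPv]
        intro h0
        exact hα (Units.ext (by push_cast at h0 ⊢; linear_combination -h0))
      · have hcu : c₂ k ≠ u := fun h => hbcne₂ k k (hku.trans h.symm)
        rw [hku, hPu, hPc₂ k (Or.inl hku) hcu hcv]
        have := hy₂ k
        rw [hku] at this
        simpa [hQ] using this
    · by_cases hkv : b₂ k = v
      · have hcu : c₂ k ≠ u := by
          intro h
          have : v < u := hkv ▸ h ▸ hbc₂ k
          exact absurd huv (not_lt.2 this.le)
        have hcv : c₂ k ≠ v := fun h => (hbc₂ k).ne (hkv.trans h.symm)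
        rw [hkv, hPv, hPc₂ k (Or.inr hkv) hcu hcv]
        have := hy₂ k
        rw [hkv] at this
        simpa [hQ, hvu] using this
      · -- b₂ k is a "free" vertex
        have h3' : ∃ k', b₂ k' = b₂ k := ⟨k, rfl⟩
        have hPb : P (b₂ k) = y₁ k := by
          rw [hP]
          simp only []
          rw [if_neg hku, if_neg hkv, dif_pos h3']
          congr 1
          exact hbinj₂ h3'.choose_spec
        rw [hPb, hPc k hku hkv]
        exact hy₁ k
  refine ⟨⟨P, ?_, ?_⟩, ?_⟩
  · -- f₁ vanishes at P
    rw [map_prod]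
    apply Finset.prod_eq_zero (Finset.mem_univ k₀)
    simp only [map_add, map_mul, eval_X, eval_C]
    rw [← hu, ← hv, hPu, hPv]
    push_cast
    ring
  · -- f₂ does not vanish at P
    rw [map_prod]
    rw [Finset.prod_ne_zero_iff]
    intro k _
    simpa using hf₂ k
  · -- hence the evaluation functions differ
    intro hfun
    have h1 : MvPolynomial.eval (fun i => (P i : F))
        (∏ k, (X (b₁ k) + C ((α₁ k : F)) * X (c₁ k))) = 0 := by
      rw [map_prod]
      apply Finset.prod_eq_zero (Finset.mem_univ k₀)
      simp only [map_add, map_mul, eval_X, eval_C]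
      rw [← hu, ← hv, hPu, hPv]
      push_cast
      ring
    have h2 : MvPolynomial.eval (fun i => (P i : F))
        (∏ k, (X (b₂ k) + C ((α₂ k : F)) * X (c₂ k))) ≠ 0 := by
      rw [map_prod, Finset.prod_ne_zero_iff]
      intro k _
      simpa using hf₂ k
    exact h2 (by rw [← congrFun hfun P]; exact h1)
end

section
/- Let q ≥ 4 and let s, d be positive integers with d ≥ 2 and 2d + 2 ≤ s. For i ∈ {1, 2}, let f_i = (∏_{k=1}^{d−1} (t_{b_k^{(i)}} + α_k^{(i)} t_{c_k^{(i)}}))·(t_{e_1^{(i)}} + β_2^{(i)} t_{e_2^{(i)}} + β_3^{(i)} t_{e_3^{(i)}} + β_4^{(i)} t_{e_4^{(i)}}), where for each i the indices b_1^{(i)}, …, b_{d−1}^{(i)}, c_1^{(i)}, …, c_{d−1}^{(i)}, e_1^{(i)}, e_2^{(i)}, e_3^{(i)}, e_4^{(i)} are 2d + 2 distinct elements of {1,…,s} with b_1^{(i)} < ⋯ < b_{d−1}^{(i)}, b_k^{(i)} < c_k^{(i)} for all k, and e_1^{(i)} < e_2^{(i)} < e_3^{(i)} < e_4^{(i)},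 and all coefficients α_k^{(i)}, β_2^{(i)}, β_3^{(i)}, β_4^{(i)} lie in F_q^*. If the 5-tuples of data ((b_k^{(i)})_k, (c_k^{(i)})_k, (α_k^{(i)})_k, (e_1^{(i)},e_2^{(i)},e_3^{(i)},e_4^{(i)}), (β_2^{(i)},β_3^{(i)},β_4^{(i)})) for i = 1, 2 are distinct, then the evaluation functions P ↦ f_1(P) and P ↦ f_2(P) on (F_q^*)^s are distinct. -/
open MvPolynomial

open Finset

section
namespace Stmt17Aux

variable {F : Type*} [Field F] {s d' : ℕ}

/-- The set of variables of a monomial in the expansion. -/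
def A (b c : Fin d' → Fin s) (e : Fin 4 → Fin s) (S : Finset (Fin d')) (j : Fin 4) :
    Finset (Fin s) :=
  S.image b ∪ (univ \ S).image c ∪ {e j}

/-- The exponent vector of a monomial in the expansion. -/
noncomputable def M (b c : Fin d' → Fin s) (e : Fin 4 → Fin s) (S : Finset (Fin d')) (j : Fin 4) :
    Fin s →₀ ℕ :=
  ((∑ k ∈ S, Finsupp.single (b k) 1) + (∑ k ∈ univ \ S, Finsupp.single (c k) 1))
    + Finsupp.single (e j) 1

lemma memA {b c : Fin d' → Fin s} {e : Fin 4 → Fin s} {S : Finset (Fin d')} {j : Fin 4}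
    {x : Fin s} :
    x ∈ A b c e S j ↔ (∃ k ∈ S, b k = x) ∨ (∃ k, k ∉ S ∧ c k = x) ∨ e j = x := by
  simp [A, Finset.mem_union, Finset.mem_image, Finset.mem_sdiff, or_assoc, eq_comm]
  exact or_comm.trans or_assoc

lemma sum_single_apply {ι : Type*} [DecidableEq ι] (T : Finset ι) (f : ι → Fin s)
    (hf : Set.InjOn f T) (x : Fin s) :
    (∑ k ∈ T, Finsupp.single (f k) (1 : ℕ)) x = if x ∈ T.image f then 1 else 0 := by
  rw [Finsupp.finset_sum_apply]
  have : ∑ k ∈ T, (Finsupp.single (f k) (1 : ℕ)) x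
      = ∑ y ∈ T.image f, if y = x then 1 else 0 := by
    rw [Finset.sum_image (fun a ha b hb h => hf ha hb h)]
    simp [Finsupp.single_apply]
  rw [this, Finset.sum_ite_eq']

section inj

variable {b c : Fin d' → Fin s} {e : Fin 4 → Fin s}
variable (hinj : Function.Injective (Sum.elim (Sum.elim b c) e))

include hinj

lemma binj : Function.Injective b := fun k l h => by
  have := hinj (a₁ := .inl (.inl k)) (a₂ := .inl (.inl l)) h; simpa using this

lemma cinj : Function.Injective c := fun k l h => by
  have := hinj (a₁ := .inl (.inr k)) (a₂ := .inl (.inr l)) h; simpa using this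

lemma einj : Function.Injective e := fun k l h => by
  have := hinj (a₁ := .inr k) (a₂ := .inr l) h; simpa using this

lemma hbc : ∀ k l, b k ≠ c l := fun k l h => by
  have := hinj (a₁ := .inl (.inl k)) (a₂ := .inl (.inr l)) h; simp at this

lemma hbe : ∀ k j, b k ≠ e j := fun k j h => by
  have := hinj (a₁ := .inl (.inl k)) (a₂ := .inr j) h; simp at this

lemma hce : ∀ k j, c k ≠ e j := fun k j h => by
  have := hinj (a₁ := .inl (.inr k)) (a₂ := .inr j) h; simp at this

lemma M_apply (S : Finset (Fin d')) (j : Fin 4) (x : Fin s) :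
    M b c e S j x = if x ∈ A b c e S j then 1 else 0 := by
  have h1 := sum_single_apply S b ((binj hinj).injOn) x
  have h2 := sum_single_apply (univ \ S) c ((cinj hinj).injOn) x
  have key : M b c e S j x = (if x ∈ S.image b then 1 else 0)
      + (if x ∈ (univ \ S).image c then 1 else 0) + (if e j = x then 1 else 0) := by
    simp only [M, Finsupp.add_apply, h1, h2, Finsupp.single_apply]
  rw [key]
  by_cases hb' : x ∈ S.image b
  · obtain ⟨k, hk, rfl⟩ := Finset.mem_image.mp hb'
    have hc' : b k ∉ (univ \ S).image c := by
      simp only [Finset.mem_image]; rintro ⟨l, -, hl⟩; exact hbc hinj k l hl.symm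
    have he' : e j ≠ b k := fun h => (hbe hinj k j h.symm).elim
    have hA : b k ∈ A b c e S j := by rw [memA]; exact Or.inl ⟨k, hk, rfl⟩
    simp [hb', hc', he', hA]
  · by_cases hc' : x ∈ (univ \ S).image c
    · obtain ⟨k, hk, rfl⟩ := Finset.mem_image.mp hc'
      have he' : e j ≠ c k := fun h => (hce hinj k j h.symm).elim
      have hA : c k ∈ A b c e S j := by
        rw [memA]; exact Or.inr (Or.inl ⟨k, (Finset.mem_sdiff.mp hk).2, rfl⟩)
      simp [hb', hc', he', hA]
    · by_cases he' : e j = x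
      · subst he'
        have hA : e j ∈ A b c e S j := by rw [memA]; exact Or.inr (Or.inr rfl)
        simp [hb', hc', hA]
      · have hA : x ∉ A b c e S j := by
          rw [memA]
          push_neg
          refine ⟨?_, ?_, he'⟩
          · intro k hk h; exact hb' (Finset.mem_image.mpr ⟨k, hk, h⟩)
          · intro k hk h
            exact hc' (Finset.mem_image.mpr ⟨k, Finset.mem_sdiff.mpr ⟨Finset.mem_univ k, hk⟩, h⟩)
        simp [hb', hc', he', hA]

lemma M_support (S : Finset (Fin d')) (j : Fin 4) :
    (M b c e S j).support = A b c e S j := by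
  ext x
  rw [Finsupp.mem_support_iff, M_apply hinj]
  split <;> simp_all

lemma M_le_one (S : Finset (Fin d')) (j : Fin 4) (x : Fin s) : M b c e S j x ≤ 1 := by
  rw [M_apply hinj]; split <;> simp

lemma bmemA {S : Finset (Fin d')} {j : Fin 4} {k : Fin d'} :
    b k ∈ A b c e S j ↔ k ∈ S := by
  rw [memA]
  constructor
  · rintro (⟨l, hl, h⟩ | ⟨l, -, h⟩ | h)
    · rwa [← binj hinj h]
    · exact absurd h.symm (hbc hinj k l)
    · exact absurd h.symm (hbe hinj k j)
  · intro hk; exact Or.inl ⟨k, hk, rfl⟩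

lemma cmemA {S : Finset (Fin d')} {j : Fin 4} {k : Fin d'} :
    c k ∈ A b c e S j ↔ k ∉ S := by
  rw [memA]
  constructor
  · rintro (⟨l, hl, h⟩ | ⟨l, hl, h⟩ | h)
    · exact absurd h (hbc hinj l k)
    · rwa [← cinj hinj h]
    · exact absurd h.symm (hce hinj k j)
  · intro hk; exact Or.inr (Or.inl ⟨k, hk, rfl⟩)

lemma ememA {S : Finset (Fin d')} {j m : Fin 4} :
    e m ∈ A b c e S j ↔ j = m := by
  rw [memA]
  constructor
  · rintro (⟨l, hl, h⟩ | ⟨l, hl, h⟩ | h)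
    · exact absurd h (hbe hinj l m)
    · exact absurd h (hce hinj l m)
    · exact einj hinj h
  · rintro rfl; exact Or.inr (Or.inr rfl)

lemma A_inj {S S' : Finset (Fin d')} {j j' : Fin 4}
    (h : A b c e S j = A b c e S' j') : S = S' ∧ j = j' := by
  constructor
  · ext k
    rw [← bmemA hinj (S := S) (j := j), h, bmemA hinj]
  · have : e j ∈ A b c e S' j' := h ▸ (ememA hinj).mpr rfl
    exact ((ememA hinj).mp this).symm

lemma M_inj {S S' : Finset (Fin d')} {j j' : Fin 4}
    (h : M b c e S j = M b c e S' j') : S = S' ∧ j = j' := by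
  apply A_inj hinj
  rw [← M_support hinj, h, M_support hinj]

end inj

/-- The polynomial under consideration. -/
noncomputable def P (b c : Fin d' → Fin s) (e : Fin 4 → Fin s) (α : Fin d' → F) (γ : Fin 4 → F) :
    MvPolynomial (Fin s) F :=
  (∏ k, (X (b k) + C (α k) * X (c k))) * ∑ j, C (γ j) * X (e j)

lemma prod_X_monomial {ι : Type*} (T : Finset ι) (f : ι → Fin s) :
    (∏ k ∈ T, (X (f k) : MvPolynomial (Fin s) F))
      = monomial (∑ k ∈ T, Finsupp.single (f k) 1) 1 := by
  classical
  induction T using Finset.cons_induction with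
  | empty => simp
  | cons a T ha ih =>
      rw [Finset.prod_cons, Finset.sum_cons, ih, X, monomial_mul, one_mul]

lemma expand (b c : Fin d' → Fin s) (e : Fin 4 → Fin s) (α : Fin d' → F) (γ : Fin 4 → F) :
    P b c e α γ = ∑ S ∈ (univ : Finset (Fin d')).powerset, ∑ j,
      monomial (M b c e S j) ((∏ k ∈ univ \ S, α k) * γ j) := by
  rw [P, Finset.prod_add, Finset.sum_mul]
  refine Finset.sum_congr rfl fun S _ => ?_
  rw [Finset.mul_sum]
  refine Finset.sum_congr rfl fun j _ => ?_
  rw [Finset.prod_mul_distrib,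
    ← map_prod (C : F →+* MvPolynomial (Fin s) F) α (univ \ S),
    prod_X_monomial, prod_X_monomial, C_mul_X_eq_monomial, C_mul_monomial, mul_one]
  rw [monomial_mul, monomial_mul, one_mul, M]

lemma coeff_P {b c : Fin d' → Fin s} {e : Fin 4 → Fin s}
    (hinj : Function.Injective (Sum.elim (Sum.elim b c) e))
    (α : Fin d' → F) (γ : Fin 4 → F) (S : Finset (Fin d')) (j : Fin 4) :
    coeff (M b c e S j) (P b c e α γ) = (∏ k ∈ univ \ S, α k) * γ j := by
  classical
  rw [expand]
  simp only [coeff_sum]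
  rw [Finset.sum_eq_single_of_mem S (Finset.mem_powerset.mpr (Finset.subset_univ S))]
  · rw [Finset.sum_eq_single_of_mem j (Finset.mem_univ j)]
    · simp [coeff_monomial]
    · intro j' _ hj'
      rw [coeff_monomial]
      exact if_neg fun h => hj' (M_inj hinj h).2
  · intro S' _ hS'
    apply Finset.sum_eq_zero
    intro j' _
    rw [coeff_monomial]
    exact if_neg fun h => hS' (M_inj hinj h).1

lemma support_P (b c : Fin d' → Fin s) (e : Fin 4 → Fin s) (α : Fin d' → F) (γ : Fin 4 → F)
    {μ : Fin s →₀ ℕ} (hμ : μ ∈ (P b c e α γ).support) :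
    ∃ S j, μ = M b c e S j := by
  classical
  rw [expand] at hμ
  have h1 := MvPolynomial.support_sum hμ
  obtain ⟨S, _, h2⟩ := Finset.mem_biUnion.mp h1
  have h3 := MvPolynomial.support_sum h2
  obtain ⟨j, _, h4⟩ := Finset.mem_biUnion.mp h3
  refine ⟨S, j, ?_⟩
  rw [MvPolynomial.mem_support_iff, coeff_monomial] at h4
  by_contra hne
  exact h4 (if_neg fun h => hne h.symm)

/-- Vanishing on the torus implies vanishing, for multilinear polynomials. -/
lemma torus_eq_zero [Fintype F] (hF : 3 ≤ Fintype.card F) (p : MvPolynomial (Fin s) F)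
    (hdeg : ∀ m ∈ p.support, ∀ i, m i ≤ 1)
    (h0 : ∀ v : Fin s → Fˣ, eval (fun i => (v i : F)) p = 0) : p = 0 := by
  classical
  set u : Fin s →₀ ℕ := ∑ i : Fin s, Finsupp.single i 1 with hu
  have hXprod : (∏ i : Fin s, (X i : MvPolynomial (Fin s) F)) = monomial u 1 :=
    prod_X_monomial univ id
  set g : MvPolynomial (Fin s) F := p * ∏ i : Fin s, X i with hg
  have hu_le : ∀ i, u i ≤ 1 := by
    intro i
    have : u i = 1 := by
      rw [hu, Finsupp.finset_sum_apply]
      simp [Finsupp.single_apply]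
    omega
  have hg0 : ∀ v : Fin s → F, eval v g = 0 := by
    intro v
    by_cases hv : ∀ i, v i ≠ 0
    · have h1 := h0 fun i => Units.mk0 (v i) (hv i)
      have h2 : (fun i => ((Units.mk0 (v i) (hv i) : Fˣ) : F)) = v := by funext i; rfl
      rw [h2] at h1
      rw [hg, map_mul, h1, zero_mul]
    · push_neg at hv
      obtain ⟨i, hi⟩ := hv
      rw [hg, map_mul, map_prod]
      rw [Finset.prod_eq_zero (Finset.mem_univ i) (by simpa using hi), mul_zero]
  have hgdeg : g ∈ restrictDegree (Fin s) F (Fintype.card F - 1) := by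
    rw [MvPolynomial.mem_restrictDegree]
    intro m hm i
    rw [MvPolynomial.mem_support_iff, hg, hXprod, coeff_mul_monomial'] at hm
    split_ifs at hm with hle
    · have h1 : (m - u) i ≤ 1 := by
        by_cases hms : m - u ∈ p.support
        · exact hdeg _ hms i
        · simp [MvPolynomial.notMem_support_iff.mp hms] at hm
      have h2 : u i ≤ m i := (Finsupp.le_def.mp hle) i
      have h3 : (m - u) i = m i - u i := Finsupp.tsub_apply m u i
      have := hu_le i
      omega
    · exact absurd rfl hm
  have hgz : g = 0 := by
    let f : Fin s → ULift.{u_1} (Fin s) := ULift.up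
    have hfinj : Function.Injective f := fun a b h => congrArg ULift.down h
    have hq0 : rename f g = 0 := by
      apply MvPolynomial.eq_zero_of_eval_eq_zero (ULift.{u_1} (Fin s)) F
      · intro v
        rw [eval_rename]
        exact hg0 _
      · rw [MvPolynomial.mem_restrictDegree]
        intro m hm i
        rw [MvPolynomial.support_rename_of_injective hfinj] at hm
        obtain ⟨m', hm', rfl⟩ := Finset.mem_image.mp hm
        rcases eq_or_ne (Finsupp.mapDomain f m' i) 0 with h | h
        · omega
        · have : i ∈ (Finsupp.mapDomain f m').support := Finsupp.mem_support_iff.mpr h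
          have hsub := Finsupp.mapDomain_support_of_injective hfinj m'
          rw [hsub] at this
          obtain ⟨a, _, rfl⟩ := Finset.mem_image.mp this
          rw [Finsupp.mapDomain_apply hfinj]
          have h2 := (MvPolynomial.mem_restrictDegree _ _ _).mp hgdeg m' hm' a
          omega
    have := MvPolynomial.rename_injective f hfinj
      (by rw [hq0, map_zero] : rename f g = rename f 0)
    exact this
  rcases mul_eq_zero.mp hgz with h | h
  · exact h
  · exact absurd h (by rw [hXprod]; simp [monomial_eq_zero])

section comb

variable {b₁ c₁ b₂ c₂ : Fin d' → Fin s} {e₁ e₂ : Fin 4 → Fin s}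
variable (hinj₁ : Function.Injective (Sum.elim (Sum.elim b₁ c₁) e₁))
variable (hinj₂ : Function.Injective (Sum.elim (Sum.elim b₂ c₂) e₂))

include hinj₁

/-- If two `e₁`-indices lie in a common `A₂`-set, they are equal. -/
lemma e_clash (H21 : ∀ S j, ∃ S' j', A b₂ c₂ e₂ S j = A b₁ c₁ e₁ S' j')
    {S : Finset (Fin d')} {j : Fin 4} {u v : Fin 4}
    (hu : e₁ u ∈ A b₂ c₂ e₂ S j) (hv : e₁ v ∈ A b₂ c₂ e₂ S j) : u = v := by
  obtain ⟨T, m, hT⟩ := H21 S j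
  have h1 := (ememA hinj₁).mp (hT ▸ hu)
  have h2 := (ememA hinj₁).mp (hT ▸ hv)
  exact h1.symm.trans h2

/-- `b₁ k` and `c₁ k` never lie in a common `A₂`-set. -/
lemma bc_clash (H21 : ∀ S j, ∃ S' j', A b₂ c₂ e₂ S j = A b₁ c₁ e₁ S' j')
    {S : Finset (Fin d')} {j : Fin 4} {k : Fin d'}
    (hb : b₁ k ∈ A b₂ c₂ e₂ S j) (hc : c₁ k ∈ A b₂ c₂ e₂ S j) : False := by
  obtain ⟨T, m, hT⟩ := H21 S j
  have h1 := (bmemA hinj₁).mp (hT ▸ hb)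
  have h2 := (cmemA hinj₁).mp (hT ▸ hc)
  exact h2 h1

include hinj₂

lemma stepE (H12 : ∀ S j, ∃ S' j', A b₁ c₁ e₁ S j = A b₂ c₂ e₂ S' j')
    (H21 : ∀ S j, ∃ S' j', A b₂ c₂ e₂ S j = A b₁ c₁ e₁ S' j') :
    ∀ j, ∃ m, e₁ j = e₂ m := by
  intro j
  obtain ⟨S', j', hA⟩ := H12 ∅ j
  have h1 : e₁ j ∈ A b₂ c₂ e₂ S' j' := hA ▸ (ememA hinj₁).mpr rfl
  rw [memA] at h1
  rcases h1 with ⟨k, hk, hbk⟩ | ⟨k, hk, hck⟩ | he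
  · -- e₁ j = b₂ k : impossible
    exfalso
    have key : ∀ j'', j'' ≠ j → e₁ j'' = c₂ k := by
      intro j'' hne
      obtain ⟨T, m, hT⟩ := H12 ∅ j''
      have h2 : e₁ j'' ∈ A b₂ c₂ e₂ T m := hT ▸ (ememA hinj₁).mpr rfl
      rw [memA] at h2
      rcases h2 with ⟨l, hl, hbl⟩ | ⟨l, hl, hcl⟩ | he2
      · -- e₁ j'' = b₂ l
        exfalso
        have hu : e₁ j ∈ A b₂ c₂ e₂ univ 0 := by
          rw [← hbk]; exact (bmemA hinj₂).mpr (mem_univ k)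
        have hv : e₁ j'' ∈ A b₂ c₂ e₂ univ 0 := by
          rw [← hbl]; exact (bmemA hinj₂).mpr (mem_univ l)
        exact hne (e_clash hinj₁ H21 hv hu)
      · -- e₁ j'' = c₂ l
        rcases eq_or_ne l k with rfl | hlk
        · exact hcl.symm
        · exfalso
          have hu : e₁ j ∈ A b₂ c₂ e₂ {k} 0 := by
            rw [← hbk]; exact (bmemA hinj₂).mpr (mem_singleton_self k)
          have hv : e₁ j'' ∈ A b₂ c₂ e₂ {k} 0 := by
            rw [← hcl]; exact (cmemA hinj₂).mpr (by simp [hlk])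
          exact hne (e_clash hinj₁ H21 hv hu)
      · -- e₁ j'' = e₂ m'
        exfalso
        obtain ⟨m', hm'⟩ : ∃ m', e₂ m' = e₁ j'' := ⟨_, he2⟩
        have hu : e₁ j ∈ A b₂ c₂ e₂ univ m' := by
          rw [← hbk]; exact (bmemA hinj₂).mpr (mem_univ k)
        have hv : e₁ j'' ∈ A b₂ c₂ e₂ univ m' := by
          rw [← hm']; exact (ememA hinj₂).mpr rfl
        exact hne (e_clash hinj₁ H21 hv hu)
    obtain ⟨u, v, huv, hu, hv⟩ : ∃ u v : Fin 4, u ≠ v ∧ u ≠ j ∧ v ≠ j := by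
      fin_cases j <;> decide
    exact huv (einj hinj₁ ((key u hu).trans (key v hv).symm))
  · -- e₁ j = c₂ k : impossible (symmetric)
    exfalso
    have key : ∀ j'', j'' ≠ j → e₁ j'' = b₂ k := by
      intro j'' hne
      obtain ⟨T, m, hT⟩ := H12 ∅ j''
      have h2 : e₁ j'' ∈ A b₂ c₂ e₂ T m := hT ▸ (ememA hinj₁).mpr rfl
      rw [memA] at h2
      rcases h2 with ⟨l, hl, hbl⟩ | ⟨l, hl, hcl⟩ | he2
      · -- e₁ j'' = b₂ l
        rcases eq_or_ne l k with rfl | hlk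
        · exact hbl.symm
        · exfalso
          have hu : e₁ j ∈ A b₂ c₂ e₂ {l} 0 := by
            rw [← hck]; exact (cmemA hinj₂).mpr (by simp [Ne.symm hlk])
          have hv : e₁ j'' ∈ A b₂ c₂ e₂ {l} 0 := by
            rw [← hbl]; exact (bmemA hinj₂).mpr (mem_singleton_self l)
          exact hne (e_clash hinj₁ H21 hv hu)
      · -- e₁ j'' = c₂ l
        exfalso
        have hu : e₁ j ∈ A b₂ c₂ e₂ ∅ 0 := by
          rw [← hck]; exact (cmemA hinj₂).mpr (notMem_empty k)
        have hv : e₁ j'' ∈ A b₂ c₂ e₂ ∅ 0 := by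
          rw [← hcl]; exact (cmemA hinj₂).mpr (notMem_empty l)
        exact hne (e_clash hinj₁ H21 hv hu)
      · -- e₁ j'' = e₂ m'
        exfalso
        have hu : e₁ j ∈ A b₂ c₂ e₂ ∅ m := by
          rw [← hck]; exact (cmemA hinj₂).mpr (notMem_empty k)
        have hv : e₁ j'' ∈ A b₂ c₂ e₂ ∅ m := by
          rw [← he2]; exact (ememA hinj₂).mpr rfl
        exact hne (e_clash hinj₁ H21 hv hu)
    obtain ⟨u, v, huv, hu, hv⟩ : ∃ u v : Fin 4, u ≠ v ∧ u ≠ j ∧ v ≠ j := by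
      fin_cases j <;> decide
    exact huv (einj hinj₁ ((key u hu).trans (key v hv).symm))
  · exact ⟨j', he.symm⟩

lemma stepPair (H12 : ∀ S j, ∃ S' j', A b₁ c₁ e₁ S j = A b₂ c₂ e₂ S' j')
    (H21 : ∀ S j, ∃ S' j', A b₂ c₂ e₂ S j = A b₁ c₁ e₁ S' j')
    (hbc₁ : ∀ k, b₁ k < c₁ k) (hbc₂ : ∀ k, b₂ k < c₂ k)
    (hEE : ∀ m, ∃ u, e₂ m = e₁ u) :
    ∀ k, ∃ k', b₁ k = b₂ k' ∧ c₁ k = c₂ k' := by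
  intro k
  obtain ⟨S', j', hA⟩ := H12 univ 0
  have h1 : b₁ k ∈ A b₂ c₂ e₂ S' j' := hA ▸ (bmemA hinj₁).mpr (mem_univ k)
  rw [memA] at h1
  obtain ⟨T, m, hT⟩ := H12 ∅ 0
  have h2 : c₁ k ∈ A b₂ c₂ e₂ T m := hT ▸ (cmemA hinj₁).mpr (notMem_empty k)
  rw [memA] at h2
  rcases h1 with ⟨k', hk', hb⟩ | ⟨k', hk', hc⟩ | he
  · -- b₁ k = b₂ k'
    refine ⟨k', hb.symm, ?_⟩
    rcases h2 with ⟨l, hl, hb2⟩ | ⟨l, hl, hc2⟩ | he2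
    · -- c₁ k = b₂ l : clash
      exfalso
      have hu : b₁ k ∈ A b₂ c₂ e₂ univ 0 := by
        rw [← hb]; exact (bmemA hinj₂).mpr (mem_univ k')
      have hv : c₁ k ∈ A b₂ c₂ e₂ univ 0 := by
        rw [← hb2]; exact (bmemA hinj₂).mpr (mem_univ l)
      exact bc_clash hinj₁ H21 hu hv
    · -- c₁ k = c₂ l
      rcases eq_or_ne l k' with rfl | hlk
      · exact hc2.symm
      · exfalso
        have hu : b₁ k ∈ A b₂ c₂ e₂ {k'} 0 := by
          rw [← hb]; exact (bmemA hinj₂).mpr (mem_singleton_self k')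
        have hv : c₁ k ∈ A b₂ c₂ e₂ {k'} 0 := by
          rw [← hc2]; exact (cmemA hinj₂).mpr (by simp [hlk])
        exact bc_clash hinj₁ H21 hu hv
    · -- c₁ k = e₂ m : impossible
      exfalso
      obtain ⟨u, hu⟩ := hEE m
      exact hce hinj₁ k u (he2.symm.trans hu)
  · -- b₁ k = c₂ k' : impossible
    exfalso
    rcases h2 with ⟨l, hl, hb2⟩ | ⟨l, hl, hc2⟩ | he2
    · -- c₁ k = b₂ l
      rcases eq_or_ne l k' with rfl | hlk
      · -- b₂ l = c₁ k and c₂ l = b₁ k, but b₂ l < c₂ l gives c₁ k < b₁ k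
        have := hbc₂ l
        rw [hb2, hc] at this
        exact absurd (hbc₁ k) (not_lt.mpr this.le)
      · have hu : b₁ k ∈ A b₂ c₂ e₂ {l} 0 := by
          rw [← hc]; exact (cmemA hinj₂).mpr (by simp [Ne.symm hlk])
        have hv : c₁ k ∈ A b₂ c₂ e₂ {l} 0 := by
          rw [← hb2]; exact (bmemA hinj₂).mpr (mem_singleton_self l)
        exact bc_clash hinj₁ H21 hu hv
    · -- c₁ k = c₂ l
      have hu : b₁ k ∈ A b₂ c₂ e₂ ∅ 0 := by
        rw [← hc]; exact (cmemA hinj₂).mpr (notMem_empty k')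
      have hv : c₁ k ∈ A b₂ c₂ e₂ ∅ 0 := by
        rw [← hc2]; exact (cmemA hinj₂).mpr (notMem_empty l)
      exact bc_clash hinj₁ H21 hu hv
    · -- c₁ k = e₂ m
      obtain ⟨u, hu⟩ := hEE m
      exact hce hinj₁ k u ((hu ▸ he2) : e₁ u = c₁ k).symm
  · -- b₁ k = e₂ j'
    exfalso
    obtain ⟨u, hu⟩ := hEE j'
    exact hbe hinj₁ k u ((hu ▸ he) : e₁ u = b₁ k).symm

end comb

end Stmt17Aux


end

open Stmt17Aux

theorem stmt17 {q s d : ℕ} {F : Type*} [Field F] [Fintype F]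
    (hq : Fintype.card F = q) (hq4 : 4 ≤ q) (hd : 2 ≤ d) (hds : 2 * d + 2 ≤ s)
    (b₁ c₁ b₂ c₂ : Fin (d - 1) → Fin s) (e₁ e₂ : Fin 4 → Fin s)
    (α₁ α₂ : Fin (d - 1) → Fˣ) (β₁ β₂ : Fin 3 → Fˣ)
    (hinj₁ : Function.Injective (Sum.elim (Sum.elim b₁ c₁) e₁))
    (hinj₂ : Function.Injective (Sum.elim (Sum.elim b₂ c₂) e₂))
    (hmono₁ : StrictMono b₁) (hmono₂ : StrictMono b₂)
    (hbc₁ : ∀ k, b₁ k < c₁ k) (hbc₂ : ∀ k, b₂ k < c₂ k)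
    (hemono₁ : StrictMono e₁) (hemono₂ : StrictMono e₂)
    (hneq : ¬(b₁ = b₂ ∧ c₁ = c₂ ∧ α₁ = α₂ ∧ e₁ = e₂ ∧ β₁ = β₂)) :
    (fun P : Fin s → Fˣ => MvPolynomial.eval (fun i => (P i : F))
        ((∏ k, (X (b₁ k) + C ((α₁ k : F)) * X (c₁ k))) *
          (X (e₁ 0) + C ((β₁ 0 : F)) * X (e₁ 1) + C ((β₁ 1 : F)) * X (e₁ 2) +
            C ((β₁ 2 : F)) * X (e₁ 3)))) ≠
      (fun P : Fin s → Fˣ => MvPolynomial.eval (fun i => (P i : F))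
        ((∏ k, (X (b₂ k) + C ((α₂ k : F)) * X (c₂ k))) *
          (X (e₂ 0) + C ((β₂ 0 : F)) * X (e₂ 1) + C ((β₂ 1 : F)) * X (e₂ 2) +
            C ((β₂ 2 : F)) * X (e₂ 3)))) := by
  intro h
  classical
  set γ₁ : Fin 4 → F := ![1, (β₁ 0 : F), (β₁ 1 : F), (β₁ 2 : F)] with hγ₁def
  set γ₂ : Fin 4 → F := ![1, (β₂ 0 : F), (β₂ 1 : F), (β₂ 2 : F)] with hγ₂def
  have hsum₁ : (∑ j, C (γ₁ j) * X (e₁ j) : MvPolynomial (Fin s) F)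
      = X (e₁ 0) + C ((β₁ 0 : F)) * X (e₁ 1) + C ((β₁ 1 : F)) * X (e₁ 2)
        + C ((β₁ 2 : F)) * X (e₁ 3) := by
    rw [Fin.sum_univ_four]
    simp [hγ₁def]
  have hsum₂ : (∑ j, C (γ₂ j) * X (e₂ j) : MvPolynomial (Fin s) F)
      = X (e₂ 0) + C ((β₂ 0 : F)) * X (e₂ 1) + C ((β₂ 1 : F)) * X (e₂ 2)
        + C ((β₂ 2 : F)) * X (e₂ 3) := by
    rw [Fin.sum_univ_four]
    simp [hγ₂def]
  have hcard : 3 ≤ Fintype.card F := by omega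
  have peq : P b₁ c₁ e₁ (fun k => (α₁ k : F)) γ₁ = P b₂ c₂ e₂ (fun k => (α₂ k : F)) γ₂ := by
    rw [← sub_eq_zero]
    apply torus_eq_zero hcard
    · intro m hm i
      rcases Finset.mem_union.mp (MvPolynomial.support_sub (Fin s) _ _ hm) with h' | h'
      · obtain ⟨S, j, rfl⟩ := support_P _ _ _ _ _ h'
        exact M_le_one hinj₁ S j i
      · obtain ⟨S, j, rfl⟩ := support_P _ _ _ _ _ h'
        exact M_le_one hinj₂ S j i
    · intro v
      rw [map_sub, sub_eq_zero, P, P, hsum₁, hsum₂]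
      exact congrFun h v
  have hγ₁ne : ∀ j, γ₁ j ≠ 0 := by intro j; fin_cases j <;> simp [hγ₁def]
  have hγ₂ne : ∀ j, γ₂ j ≠ 0 := by intro j; fin_cases j <;> simp [hγ₂def]
  have coeffne₁ : ∀ (S : Finset (Fin (d - 1))) (j : Fin 4),
      (∏ k ∈ univ \ S, ((α₁ k : F))) * γ₁ j ≠ 0 := fun S j =>
    mul_ne_zero (Finset.prod_ne_zero_iff.mpr fun k _ => Units.ne_zero (α₁ k)) (hγ₁ne j)
  have coeffne₂ : ∀ (S : Finset (Fin (d - 1))) (j : Fin 4),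
      (∏ k ∈ univ \ S, ((α₂ k : F))) * γ₂ j ≠ 0 := fun S j =>
    mul_ne_zero (Finset.prod_ne_zero_iff.mpr fun k _ => Units.ne_zero (α₂ k)) (hγ₂ne j)
  have H12 : ∀ S j, ∃ S' j', A b₁ c₁ e₁ S j = A b₂ c₂ e₂ S' j' := by
    intro S j
    have hmem : M b₁ c₁ e₁ S j ∈ (P b₂ c₂ e₂ (fun k => (α₂ k : F)) γ₂).support := by
      rw [← peq, MvPolynomial.mem_support_iff, coeff_P hinj₁]
      exact coeffne₁ S j
    obtain ⟨S', j', hM⟩ := support_P _ _ _ _ _ hmem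
    exact ⟨S', j', by rw [← M_support hinj₁, hM, M_support hinj₂]⟩
  have H21 : ∀ S j, ∃ S' j', A b₂ c₂ e₂ S j = A b₁ c₁ e₁ S' j' := by
    intro S j
    have hmem : M b₂ c₂ e₂ S j ∈ (P b₁ c₁ e₁ (fun k => (α₁ k : F)) γ₁).support := by
      rw [peq, MvPolynomial.mem_support_iff, coeff_P hinj₂]
      exact coeffne₂ S j
    obtain ⟨S', j', hM⟩ := support_P _ _ _ _ _ hmem
    exact ⟨S', j', by rw [← M_support hinj₂, hM, M_support hinj₁]⟩
  have he12 := stepE hinj₁ hinj₂ H12 H21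
  have he21 := stepE hinj₂ hinj₁ H21 H12
  have hee : e₁ = e₂ := by
    apply (StrictMono.range_inj hemono₁ hemono₂).mp
    apply Set.Subset.antisymm
    · rintro x ⟨j, rfl⟩; obtain ⟨m, hm⟩ := he12 j; exact ⟨m, hm.symm⟩
    · rintro x ⟨m, rfl⟩; obtain ⟨u, hu⟩ := he21 m; exact ⟨u, hu.symm⟩
  have hpair12 := stepPair hinj₁ hinj₂ H12 H21 hbc₁ hbc₂ he21
  have hpair21 := stepPair hinj₂ hinj₁ H21 H12 hbc₂ hbc₁ he12
  have hbb : b₁ = b₂ := by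
    apply (StrictMono.range_inj hmono₁ hmono₂).mp
    apply Set.Subset.antisymm
    · rintro x ⟨k, rfl⟩; obtain ⟨k', hk', -⟩ := hpair12 k; exact ⟨k', hk'.symm⟩
    · rintro x ⟨k, rfl⟩; obtain ⟨k', hk', -⟩ := hpair21 k; exact ⟨k', hk'.symm⟩
  have hcc : c₁ = c₂ := by
    funext k
    obtain ⟨k', h1, h2⟩ := hpair12 k
    have hk : k = k' := binj hinj₂ (by rw [hbb] at h1; exact h1)
    rw [h2, ← hk]
  have hM12 : ∀ (S : Finset (Fin (d - 1))) (j : Fin 4),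
      M b₁ c₁ e₁ S j = M b₂ c₂ e₂ S j := by
    rw [hbb, hcc, hee]; intro S j; rfl
  have hαα : α₁ = α₂ := by
    funext k
    have h1 := coeff_P hinj₁ (fun k => (α₁ k : F)) γ₁ (univ.erase k) 0
    have h2 := coeff_P hinj₂ (fun k => (α₂ k : F)) γ₂ (univ.erase k) 0
    have hkk : (univ : Finset (Fin (d - 1))) \ univ.erase k = {k} := by
      ext l; simp [eq_comm]
    rw [hkk, Finset.prod_singleton] at h1 h2
    have hco : ((α₁ k : F)) * γ₁ 0 = ((α₂ k : F)) * γ₂ 0 := by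
      rw [← h1, ← h2, hM12, peq]
    apply Units.ext
    simpa [hγ₁def, hγ₂def] using hco
  have hγγ : ∀ jj : Fin 4, γ₁ jj = γ₂ jj := by
    intro jj
    have h1 := coeff_P hinj₁ (fun k => (α₁ k : F)) γ₁ univ jj
    have h2 := coeff_P hinj₂ (fun k => (α₂ k : F)) γ₂ univ jj
    rw [Finset.sdiff_self, Finset.prod_empty, one_mul] at h1 h2
    rw [← h1, ← h2, hM12, peq]
  have hββ : β₁ = β₂ := by
    funext j
    apply Units.ext
    fin_cases j
    · simpa [hγ₁def, hγ₂def] using hγγ 1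
    · simpa [hγ₁def, hγ₂def] using hγγ 2
    · simpa [hγ₁def, hγ₂def] using hγγ 3
  exact hneq ⟨hbb, hcc, hαα, hee, hββ⟩
end
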